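/- arXiv:1809.10942 — 4 statements merged into one kernel-verified Lean document; each statement's English description precedes it below -/
import Mathlib

section
/- Let U ⊆ Λ ⊆ ℝ^d be measurable sets with |Λ| = 1 and |U| > 0, let f ∈ L²(Λ), C ∈ [1,∞), and α ∈ (0,∞). Define W := {x ∈ Λ : |f(x)| < (|U|/(1+C))^α ‖f‖_{L²(Λ)}}. Assume that sup_{x ∈ U} |f(x)| ≥ (|U|/C)^α ‖f‖_{L²(Λ)} and sup_{x ∈ W} |f(x)| ≥ (|W|/C)^α ‖f‖_{L²(Λ)}. Then |W| ≤ C(1+C)^{−1}|U| and ‖f‖_{L²(U)} ≥ (|U|/(1+C))^{α + 1/2} ‖f‖_{L²(Λ)}. -/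
/-!
Off `W` the function satisfies `|f| ≥ t := (|U|/(1+C))^α ‖f‖`, while on `W` it stays below `t`, so
the hypothesis on `sup_W |f|` forces `(|W|/C)^α ≤ (|U|/(1+C))^α`, i.e. `|W| ≤ C|U|/(1+C)`.
Hence `|U \ W| ≥ |U|/(1+C)`, and Chebyshev's inequality on `U` gives
`‖f‖²_{L²(U)} ≥ t² |U|/(1+C) = (|U|/(1+C))^{2α+1} ‖f‖²`.
-/

open MeasureTheory
open scoped ENNReal

variable {X E : Type*} [MeasurableSpace X] [NormedAddCommGroup E] {μ : Measure X}

theorem measureReal_le_mul_of_rpow_le_sSup_norm {f : X → E} {W : Set X} {α b C N : ℝ}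
    (hα : 0 < α) (hb : 0 ≤ b) (hC : 0 < C) (hW : ∀ x ∈ W, ‖f x‖ < b ^ α * N)
    (hsup : (μ.real W / C) ^ α * N ≤ sSup ((fun x => ‖f x‖) '' W)) :
    μ.real W ≤ C * b := by
  rcases W.eq_empty_or_nonempty with rfl | ⟨x, hx⟩
  · simpa using mul_nonneg hC.le hb
  have hN : 0 < N :=
    pos_of_mul_pos_right ((norm_nonneg _).trans_lt (hW x hx)) (Real.rpow_nonneg hb α)
  have hsSup : sSup ((fun x => ‖f x‖) '' W) ≤ b ^ α * N :=
    csSup_le ⟨_, x, hx, rfl⟩ (by rintro _ ⟨y, hy, rfl⟩; exact (hW y hy).le)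
  have hWb : μ.real W / C ≤ b :=
    (Real.rpow_le_rpow_iff (by positivity) hb hα).1
      (le_of_mul_le_mul_right (hsup.trans hsSup) hN)
  rwa [div_le_iff₀ hC, mul_comm] at hWb

theorem sq_mul_measureReal_sub_le_setIntegral_norm_sq {f : X → E} {U W : Set X} {t : ℝ}
    (ht : 0 ≤ t) (hU : μ U ≠ ∞) (hW : μ W ≠ ∞)
    (hf : IntegrableOn (fun x => ‖f x‖ ^ 2) U μ) (hge : ∀ x ∈ U \ W, t ≤ ‖f x‖) :
    t ^ 2 * (μ.real U - μ.real W) ≤ ∫ x in U, ‖f x‖ ^ 2 ∂μ := by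
  have hsub : U \ W ⊆ {x | t ^ 2 ≤ ‖f x‖ ^ 2} ∩ U :=
    fun x hx => ⟨pow_le_pow_left₀ ht (hge x hx) 2, hx.1⟩
  calc t ^ 2 * (μ.real U - μ.real W)
      ≤ t ^ 2 * μ.real (U \ W) := by gcongr; exact le_measureReal_sdiff hW
    _ ≤ t ^ 2 * (μ.restrict U).real {x | t ^ 2 ≤ ‖f x‖ ^ 2} := by
        gcongr
        exact ENNReal.toReal_mono
          (measure_ne_top_of_subset (Set.subset_univ _) (by rwa [Measure.restrict_apply_univ]))
          ((measure_mono hsub).trans (Measure.le_restrict_apply _ _))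
    _ ≤ ∫ x in U, ‖f x‖ ^ 2 ∂μ :=
        mul_meas_ge_le_integral_of_nonneg (ae_of_all _ fun _ => by positivity) hf _

theorem Real.rpow_add_half_mul_sq {b : ℝ} (hb : 0 < b) (α N : ℝ) :
    (b ^ (α + 1 / 2) * N) ^ 2 = (b ^ α * N) ^ 2 * b := by
  rw [Real.rpow_add hb, ← Real.sqrt_eq_rpow, mul_right_comm, mul_pow _ √b,
    Real.sq_sqrt hb.le]

theorem stmt_1_general (d : ℕ) (U Λ : Set (Fin d → ℝ)) (hUΛ : U ⊆ Λ)
    (hΛ1 : volume Λ = 1) (hU0 : 0 < volume U)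
    (f : (Fin d → ℝ) → ℂ)
    (hf2 : IntegrableOn (fun x => ‖f x‖ ^ 2) Λ)
    (C α : ℝ) (hC : 1 ≤ C) (hα : 0 < α)
    (N : ℝ) (hN : N = Real.sqrt (∫ x in Λ, ‖f x‖ ^ 2))
    (W : Set (Fin d → ℝ))
    (hW : W = {x ∈ Λ | ‖f x‖ < ((volume U).toReal / (1 + C)) ^ α * N})
    (hsupW : ((volume W).toReal / C) ^ α * N ≤ sSup ((fun x => ‖f x‖) '' W)) :
    (volume W).toReal ≤ C / (1 + C) * (volume U).toReal ∧
      ((volume U).toReal / (1 + C)) ^ (α + 1 / 2) * N ≤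
        Real.sqrt (∫ x in U, ‖f x‖ ^ 2) := by
  simp only [← measureReal_def] at hW hsupW ⊢
  set b := volume.real U / (1 + C) with hb
  have hΛfin : volume Λ ≠ ∞ := by simp [hΛ1]
  have hUfin : volume U ≠ ∞ := measure_ne_top_of_subset hUΛ hΛfin
  have hbpos : 0 < b := div_pos (ENNReal.toReal_pos hU0.ne' hUfin) (by linarith)
  have hNnn : 0 ≤ N := hN ▸ Real.sqrt_nonneg _
  have hmemW (x) : x ∈ W ↔ x ∈ Λ ∧ ‖f x‖ < b ^ α * N := Set.ext_iff.1 hW x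
  have hWb : volume.real W ≤ C * b :=
    measureReal_le_mul_of_rpow_le_sSup_norm hα hbpos.le (by linarith)
      (fun x hx => ((hmemW x).1 hx).2) hsupW
  have hU : volume.real U = (1 + C) * b := by rw [hb]; field_simp
  refine ⟨hWb.trans_eq (by rw [hb]; ring), ?_⟩
  have hL2 := sq_mul_measureReal_sub_le_setIntegral_norm_sq (t := b ^ α * N) (by positivity)
    hUfin (measure_ne_top_of_subset (fun x hx => ((hmemW x).1 hx).1) hΛfin) (hf2.mono_set hUΛ)
    fun x hx => not_lt.1 fun hlt => hx.2 ((hmemW x).2 ⟨hUΛ hx.1, hlt⟩)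
  rw [Real.le_sqrt (by positivity) (setIntegral_nonneg_of_ae (ae_of_all _ fun _ => by positivity)),
    Real.rpow_add_half_mul_sq hbpos]
  calc (b ^ α * N) ^ 2 * b ≤ (b ^ α * N) ^ 2 * (volume.real U - volume.real W) := by
        gcongr; linarith
    _ ≤ _ := hL2

/-- level-set lemma. -/
theorem stmt_1 (d : ℕ) (U Λ : Set (Fin d → ℝ)) (hUΛ : U ⊆ Λ)
    (hΛm : MeasurableSet Λ) (hUm : MeasurableSet U)
    (hΛ1 : volume Λ = 1) (hU0 : 0 < volume U)
    (f : (Fin d → ℝ) → ℂ) (hfm : Measurable f)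
    (hf2 : IntegrableOn (fun x => ‖f x‖ ^ 2) Λ)
    (C α : ℝ) (hC : 1 ≤ C) (hα : 0 < α)
    (N : ℝ) (hN : N = Real.sqrt (∫ x in Λ, ‖f x‖ ^ 2))
    (W : Set (Fin d → ℝ))
    (hW : W = {x ∈ Λ | ‖f x‖ < ((volume U).toReal / (1 + C)) ^ α * N})
    (hsupU : ((volume U).toReal / C) ^ α * N ≤ sSup ((fun x => ‖f x‖) '' U))
    (hsupW : ((volume W).toReal / C) ^ α * N ≤ sSup ((fun x => ‖f x‖) '' W)) :
    (volume W).toReal ≤ C / (1 + C) * (volume U).toReal ∧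
      ((volume U).toReal / (1 + C)) ^ (α + 1 / 2) * N ≤
        Real.sqrt (∫ x in U, ‖f x‖ ^ 2) :=
  stmt_1_general d U Λ hUΛ hΛ1 hU0 f hf2 C α hC hα N hN W hW hsupW
end

section
/- Let d ≥ 2, L > 0, γ ∈ (0,1], a = (a₁,…,a_d) ∈ ℝ₊^d with a_j ≤ 2πL for j = 1,…,d−1, and let S ⊆ Ω_L be a measurable set that is (γ,a)-thick with respect to Ω_L. Then the set S̃ := S ∪ (ℝ^d ∖ Ω_L) is (γ/2^d, 2a)-thick in ℝ^d, where 2a = (2a₁,…,2a_d). -/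
open MeasureTheory

/-- The infinite strip `Ω_L = (0,2πL)^{d-1} × ℝ ⊆ ℝ^d`. -/
def OmegaL (d : ℕ) (L : ℝ) : Set (Fin d → ℝ) :=
  {x | ∀ j : Fin d, (j : ℕ) < d - 1 → x j ∈ Set.Ioo 0 (2 * Real.pi * L)}

/-- A measurable set `S ⊆ ℝ^d` is `(γ,a)`-thick: every axis-parallel parallelepiped with
side lengths `a₁,…,a_d` satisfies `|S ∩ P| ≥ γ|P|`. -/
def IsThick {d : ℕ} (γ : ℝ) (a : Fin d → ℝ) (S : Set (Fin d → ℝ)) : Prop :=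
  ∀ c : Fin d → ℝ,
    ENNReal.ofReal γ * volume (Set.univ.pi fun j => Set.Ioo (c j) (c j + a j)) ≤
      volume (S ∩ Set.univ.pi fun j => Set.Ioo (c j) (c j + a j))

/-- A measurable set `ω` is `(γ,a)`-thick with respect to `Ω`: every axis-parallel
parallelepiped `P ⊆ Ω` with side lengths `a₁,…,a_d` satisfies `|ω ∩ P| ≥ γ|P|`. -/
def IsThickIn {d : ℕ} (γ : ℝ) (a : Fin d → ℝ) (Ω ω : Set (Fin d → ℝ)) : Prop :=
  ∀ c : Fin d → ℝ,
    (Set.univ.pi fun j => Set.Ioo (c j) (c j + a j)) ⊆ Ω →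
      ENNReal.ofReal γ * volume (Set.univ.pi fun j => Set.Ioo (c j) (c j + a j)) ≤
        volume (ω ∩ Set.univ.pi fun j => Set.Ioo (c j) (c j + a j))

open Set

/-!
Let `P` be a box with side lengths `2a`. If in some bounded direction `j` the interval
`(c_j, c_j + 2a_j)` meets `(0, 2πL)` in length less than `a_j`, then the slab of `P` lying outside
`Ω_L` in that direction already has volume at least `a_j ∏_{i ≠ j} 2a_i ≥ |P| / 2^d`. Otherwise `P`
contains a box of side lengths `a` inside `Ω_L`, and thickness of `S` in that box gives
`|S ∩ P| ≥ γ ∏ a_i = γ |P| / 2^d`.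
-/

theorem volume_pi_Ioo_add {ι : Type*} [Fintype ι] (c a : ι → ℝ) :
    volume (univ.pi fun j => Ioo (c j) (c j + a j)) = ∏ j, ENNReal.ofReal (a j) := by
  simp only [Real.volume_pi_Ioo, add_sub_cancel_left]

theorem ofReal_div_two_pow_mul_prod_two_mul {ι : Type*} [Fintype ι] (γ : ℝ) (a : ι → ℝ) :
    ENNReal.ofReal (γ / 2 ^ Fintype.card ι) * ∏ j, ENNReal.ofReal (2 * a j) =
      ENNReal.ofReal γ * ∏ j, ENNReal.ofReal (a j) := by
  have h2 : (2 : ENNReal) ^ Fintype.card ι ≠ 0 := pow_ne_zero _ two_ne_zero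
  have h2' : (2 : ENNReal) ^ Fintype.card ι ≠ ⊤ := ENNReal.pow_ne_top ENNReal.ofNat_ne_top
  simp only [ENNReal.ofReal_mul zero_le_two, ENNReal.ofReal_ofNat, Finset.prod_mul_distrib,
    Finset.prod_const, Finset.card_univ,
    ENNReal.ofReal_div_of_pos (by positivity : (0 : ℝ) < 2 ^ Fintype.card ι),
    ENNReal.ofReal_pow zero_le_two]
  rw [← mul_assoc, ENNReal.div_mul_cancel h2 h2']

theorem exists_Ioo_subset_inter_or_le_volume_diff {a : ℝ} (ha : 0 ≤ a) (c u v : ℝ) :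
    (∃ c', Ioo c' (c' + a) ⊆ Ioo c (c + 2 * a) ∩ Ioo u v) ∨
      ENNReal.ofReal a ≤ volume (Ioo c (c + 2 * a) \ Ioo u v) := by
  by_cases h : max c u + a ≤ min (c + 2 * a) v
  · exact Or.inl ⟨max c u, by rw [Ioo_inter_Ioo]; exact Ioo_subset_Ioo le_rfl h⟩
  · right
    have hsplit := measure_inter_add_sdiff (μ := volume) (Ioo c (c + 2 * a))
      (measurableSet_Ioo (a := u) (b := v))
    have hinter : volume (Ioo c (c + 2 * a) ∩ Ioo u v) ≤ ENNReal.ofReal a := by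
      rw [Ioo_inter_Ioo, Real.volume_Ioo]
      exact ENNReal.ofReal_le_ofReal (by linarith)
    have htotal : volume (Ioo c (c + 2 * a)) = ENNReal.ofReal a + ENNReal.ofReal a := by
      rw [Real.volume_Ioo, ← ENNReal.ofReal_add ha ha]
      ring_nf
    refine (ENNReal.add_le_add_iff_left (ENNReal.ofReal_ne_top (r := a))).mp ?_
    calc ENNReal.ofReal a + ENNReal.ofReal a = volume (Ioo c (c + 2 * a)) := htotal.symm
      _ ≤ ENNReal.ofReal a + volume (Ioo c (c + 2 * a) \ Ioo u v) := by
        rw [← hsplit]; gcongr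

theorem prod_le_volume_setOf_notMem_inter_pi_Ioo {ι : Type*} [Fintype ι] [DecidableEq ι]
    {c a : ι → ℝ} (ha : ∀ j, 0 ≤ a j) {j₀ : ι} {J : Set ℝ}
    (hj₀ : ENNReal.ofReal (a j₀) ≤ volume (Ioo (c j₀) (c j₀ + 2 * a j₀) \ J)) :
    ∏ j, ENNReal.ofReal (a j) ≤
      volume ({x | x j₀ ∉ J} ∩ univ.pi fun j => Ioo (c j) (c j + 2 * a j)) := by
  let slab := Function.update (fun j => Ioo (c j) (c j + 2 * a j)) j₀
    (Ioo (c j₀) (c j₀ + 2 * a j₀) \ J)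
  calc ∏ j, ENNReal.ofReal (a j) ≤ ∏ j, volume (slab j) := by
        refine Finset.prod_le_prod' fun j _ => ?_
        rcases eq_or_ne j j₀ with rfl | hj
        · simpa [slab] using hj₀
        · simp only [slab, Function.update_of_ne hj, Real.volume_Ioo]
          exact ENNReal.ofReal_le_ofReal (by linarith [ha j])
    _ = volume (univ.pi slab) := (volume_pi_pi slab).symm
    _ ≤ _ := by
        refine measure_mono fun x hx => ⟨?_, fun j _ => ?_⟩
        · have hx₀ := hx j₀ trivial
          simp only [slab, Function.update_self] at hx₀
          exact hx₀.2
        · have hxj := hx j trivial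
          rcases eq_or_ne j j₀ with rfl | hj
          · simp only [slab, Function.update_self] at hxj
            exact hxj.1
          · simpa only [slab, Function.update_of_ne hj] using hxj

theorem exists_pi_Ioo_subset_OmegaL_inter {d : ℕ} {L : ℝ} {c a : Fin d → ℝ}
    (ha : ∀ j, 0 ≤ a j)
    (h : ∀ j : Fin d, (j : ℕ) < d - 1 →
      volume (Ioo (c j) (c j + 2 * a j) \ Ioo 0 (2 * Real.pi * L)) < ENNReal.ofReal (a j)) :
    ∃ c' : Fin d → ℝ, (univ.pi fun j => Ioo (c' j) (c' j + a j)) ⊆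
      OmegaL d L ∩ univ.pi fun j => Ioo (c j) (c j + 2 * a j) := by
  have hside : ∀ j : Fin d, ∃ c', Ioo c' (c' + a j) ⊆ Ioo (c j) (c j + 2 * a j) ∧
      ((j : ℕ) < d - 1 → Ioo c' (c' + a j) ⊆ Ioo 0 (2 * Real.pi * L)) := by
    intro j
    by_cases hj : (j : ℕ) < d - 1
    · obtain ⟨c', hc'⟩ := (exists_Ioo_subset_inter_or_le_volume_diff (ha j) _ _ _).resolve_right
        (h j hj).not_ge
      exact ⟨c', fun x hx => (hc' hx).1, fun _ x hx => (hc' hx).2⟩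
    · exact ⟨c j, Ioo_subset_Ioo_right (by linarith [ha j]), fun h => absurd h hj⟩
  choose c' hsub hΩ using hside
  exact ⟨c', fun x hx => ⟨fun j hj => hΩ j hj (hx j trivial), fun j _ => hsub j (hx j trivial)⟩⟩

theorem stmt_5_general (d : ℕ) (L γ : ℝ) (hγ1 : γ ≤ 1)
    (a : Fin d → ℝ) (ha : ∀ j, 0 < a j)
    (S : Set (Fin d → ℝ))
    (hthick : IsThickIn γ a (OmegaL d L) S) :
    IsThick (γ / 2 ^ d) (fun j => 2 * a j) (S ∪ (OmegaL d L)ᶜ) := by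
  intro c
  have hscale := ofReal_div_two_pow_mul_prod_two_mul (ι := Fin d) γ a
  rw [Fintype.card_fin] at hscale
  rw [volume_pi_Ioo_add, hscale]
  have ha' : ∀ j, 0 ≤ a j := fun j => (ha j).le
  by_cases hslab : ∃ j : Fin d, (j : ℕ) < d - 1 ∧
      ENNReal.ofReal (a j) ≤ volume (Ioo (c j) (c j + 2 * a j) \ Ioo 0 (2 * Real.pi * L))
  · obtain ⟨j₀, hj₀, hvol⟩ := hslab
    calc ENNReal.ofReal γ * ∏ j, ENNReal.ofReal (a j) ≤ ∏ j, ENNReal.ofReal (a j) :=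
          mul_le_of_le_one_left' (ENNReal.ofReal_le_one.2 hγ1)
      _ ≤ _ := prod_le_volume_setOf_notMem_inter_pi_Ioo ha' hvol
      _ ≤ _ := measure_mono <| inter_subset_inter_left _
          fun x hx => Or.inr fun hΩ => hx (hΩ j₀ hj₀)
  · push Not at hslab
    obtain ⟨c', hc'⟩ := exists_pi_Ioo_subset_OmegaL_inter ha' hslab
    calc ENNReal.ofReal γ * ∏ j, ENNReal.ofReal (a j)
          = ENNReal.ofReal γ * volume (univ.pi fun j => Ioo (c' j) (c' j + a j)) := by
          rw [volume_pi_Ioo_add]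
      _ ≤ volume (S ∩ univ.pi fun j => Ioo (c' j) (c' j + a j)) :=
          hthick c' (hc'.trans inter_subset_left)
      _ ≤ _ := measure_mono <| inter_subset_inter subset_union_left fun x hx => (hc' hx).2

/-- if `S ⊆ Ω_L` is `(γ,a)`-thick with respect to `Ω_L` (with
`a_j ≤ 2πL` in the first `d-1` coordinates), then `S ∪ (ℝ^d ∖ Ω_L)` is
`(γ/2^d, 2a)`-thick in `ℝ^d`. -/
theorem stmt_5 (d : ℕ) (hd : 2 ≤ d) (L γ : ℝ) (hL : 0 < L) (hγ0 : 0 < γ) (hγ1 : γ ≤ 1)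
    (a : Fin d → ℝ) (ha : ∀ j, 0 < a j)
    (haL : ∀ j : Fin d, (j : ℕ) < d - 1 → a j ≤ 2 * Real.pi * L)
    (S : Set (Fin d → ℝ)) (hSm : MeasurableSet S) (hSΩ : S ⊆ OmegaL d L)
    (hthick : IsThickIn γ a (OmegaL d L) S) :
    IsThick (γ / 2 ^ d) (fun j => 2 * a j) (S ∪ (OmegaL d L)ᶜ) :=
  stmt_5_general d L γ hγ1 a ha S hthick
end

section
/- Let d ≥ 1, let Λ ⊂ ℝ^d be a closed axis-parallel cube with side length 1, let S ⊆ ℝ^d be measurable with |S ∩ Λ| > 0, and let y ∈ Λ. Then there exists a unit vector η ∈ ℝ^d such that, setting r₀ := sup{r ≥ 0 : y + rη ∈ Λ} (so that I := {y + rη : 0 ≤ r ≤ r₀} is the longest line segment in Λ starting at y in direction η), the one-dimensional Lebesgue measure of {t ∈ [0, r₀] : y + tη ∈ S} is at least |S ∩ Λ| / (σ_{d−1} d^{(d−1)/2}); in particular, since r₀ ≤ √d, the ratio |{t ∈ [0,r₀] : y + tη ∈ S}| / r₀ is at least |S ∩ Λ| / (σ_{d−1} d^{d/2}). -/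
/-!
Translate `y` to the origin and pass to polar coordinates:
`|S ∩ Λ| = ∫_{𝕊^{d-1}} ∫_{r > 0, y + rη ∈ S ∩ Λ} r^{d-1} dr dσ(η)`.
Since `Λ` has diameter `√d`, the inner integral is at most `d^{(d-1)/2}` times the length of
`{r > 0 : y + rη ∈ S ∩ Λ}`, and some direction `η` does at least as well as the average over the
sphere, whose total mass is `σ_{d-1} = 2π^{d/2}/Γ(d/2)`. The density bound follows from `r₀ ≤ √d`.
-/

open MeasureTheory Measure Set Metric
open scoped ENNReal

section Ray

variable {E : Type*} [NormedAddCommGroup E] [NormedSpace ℝ E]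

noncomputable def rayLength (K : Set E) (y η : E) : ℝ := sSup {r : ℝ | 0 ≤ r ∧ y + r • η ∈ K}

variable {K : Set E} {D : ℝ} {y η : E}

theorem le_of_mem_ray (hKD : ∀ a ∈ K, ∀ b ∈ K, dist a b ≤ D) (hy : y ∈ K) (hη : ‖η‖ = 1)
    {r : ℝ} (hr : 0 ≤ r ∧ y + r • η ∈ K) : r ≤ D := by
  simpa [norm_smul, hη, abs_of_nonneg hr.1] using hKD _ hr.2 y hy

theorem le_rayLength (hKD : ∀ a ∈ K, ∀ b ∈ K, dist a b ≤ D) (hy : y ∈ K) (hη : ‖η‖ = 1)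
    {r : ℝ} (hr : 0 ≤ r ∧ y + r • η ∈ K) : r ≤ rayLength K y η :=
  le_csSup ⟨D, fun _ ↦ le_of_mem_ray hKD hy hη⟩ hr

theorem rayLength_nonneg (hKD : ∀ a ∈ K, ∀ b ∈ K, dist a b ≤ D) (hy : y ∈ K) (hη : ‖η‖ = 1) :
    0 ≤ rayLength K y η :=
  le_rayLength hKD hy hη ⟨le_rfl, by simpa using hy⟩

theorem rayLength_le (hKD : ∀ a ∈ K, ∀ b ∈ K, dist a b ≤ D) (hy : y ∈ K) (hη : ‖η‖ = 1) :
    rayLength K y η ≤ D :=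
  csSup_le ⟨0, le_rfl, by simpa using hy⟩ fun _ ↦ le_of_mem_ray hKD hy hη

end Ray

section PolarCoordinates

variable {E : Type*} [NormedAddCommGroup E] [NormedSpace ℝ E] [FiniteDimensional ℝ E]
  [Nontrivial E] [MeasurableSpace E] [BorelSpace E] (μ : Measure E) [μ.IsAddHaarMeasure]

theorem measure_eq_lintegral_toSphere {T : Set E} (hT : MeasurableSet T) :
    μ T = ∫⁻ η, volumeIoiPow (Module.finrank ℝ E - 1) {r | (r : ℝ) • (η : E) ∈ T}
      ∂μ.toSphere := by
  set s : Set (sphere (0 : E) 1 × Ioi (0 : ℝ)) := {p | (p.2 : ℝ) • (p.1 : E) ∈ T}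
  have hs : MeasurableSet s := hT.preimage (by fun_prop)
  have hpre : homeomorphUnitSphereProd E ⁻¹' s = ((↑) : ({0}ᶜ : Set E) → E) ⁻¹' T := by
    ext x
    simp [s, smul_inv_smul₀ (norm_ne_zero_iff.2 x.2)]
  calc μ T = μ.comap (↑) (((↑) : ({0}ᶜ : Set E) → E) ⁻¹' T) := by
        rw [comap_subtype_coe_apply (measurableSet_singleton _).compl, Subtype.image_preimage_coe,
          inter_comm, ← sdiff_eq, measure_sdiff_null (measure_singleton 0)]
    _ = _ := by
      rw [← hpre, (measurePreserving_homeomorphUnitSphereProd μ).measure_preimage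
        hs.nullMeasurableSet, prod_apply hs]
      rfl

theorem volumeIoiPow_le_ofReal_pow_mul (n : ℕ) {s : Set (Ioi (0 : ℝ))} (hs : MeasurableSet s)
    {R : ℝ} (hR : ∀ r ∈ s, (r : ℝ) ≤ R) :
    volumeIoiPow n s ≤ ENNReal.ofReal (R ^ n) * volume ((↑) '' s : Set ℝ) := by
  rw [volumeIoiPow, withDensity_apply _ hs,
    ← (MeasurableEmbedding.subtype_coe measurableSet_Ioi).comap_apply]
  calc _ ≤ ∫⁻ _ in s, ENNReal.ofReal (R ^ n) ∂(comap Subtype.val volume) :=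
        setLIntegral_mono measurable_const fun r hr ↦
          ENNReal.ofReal_le_ofReal (pow_le_pow_left₀ r.2.out.le (hR r hr) n)
    _ = _ := setLIntegral_const _ _

theorem exists_mem_sphere_measure_le {T : Set E} (hT : MeasurableSet T) {R : ℝ}
    (hTR : T ⊆ closedBall 0 R) :
    ∃ η ∈ sphere (0 : E) 1, μ T ≤ μ.toSphere univ *
      ENNReal.ofReal (R ^ (Module.finrank ℝ E - 1)) * volume {r : ℝ | 0 < r ∧ r • η ∈ T} := by
  have hfin : μ T ≠ ∞ := (measure_closedBall_lt_top.trans_le' (measure_mono hTR)).ne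
  rw [measure_eq_lintegral_toSphere μ hT] at hfin ⊢
  obtain ⟨η, hη⟩ := exists_laverage_le (toSphere_ne_zero μ) hfin
  rw [laverage_eq, ENNReal.div_le_iff (measure_univ_ne_zero.2 (toSphere_ne_zero μ))
    (measure_ne_top _ _), mul_comm] at hη
  refine ⟨η, η.2, hη.trans ?_⟩
  rw [mul_assoc]
  gcongr
  have hslice := volumeIoiPow_le_ofReal_pow_mul (Module.finrank ℝ E - 1)
    (s := {r : Ioi (0 : ℝ) | (r : ℝ) • (η : E) ∈ T}) (hT.preimage (by fun_prop)) (R := R)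
    fun r hr ↦ by simpa [norm_smul, abs_of_pos r.2.out] using hTR hr
  have himage : ((↑) '' {r : Ioi (0 : ℝ) | (r : ℝ) • (η : E) ∈ T} : Set ℝ) =
      {r : ℝ | 0 < r ∧ r • (η : E) ∈ T} := by
    ext r
    simp [and_comm]
  rwa [himage] at hslice

theorem exists_mem_sphere_measure_inter_le {K S : Set E} (hK : MeasurableSet K) (hS : MeasurableSet S)
    {D : ℝ} (hKD : ∀ a ∈ K, ∀ b ∈ K, dist a b ≤ D) {y : E} (hy : y ∈ K) :
    ∃ η ∈ sphere (0 : E) 1, μ (S ∩ K) ≤ μ.toSphere univ *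
      ENNReal.ofReal (D ^ (Module.finrank ℝ E - 1)) *
        volume {t | t ∈ Icc 0 (rayLength K y η) ∧ y + t • η ∈ S} := by
  obtain ⟨η, hη, hle⟩ := exists_mem_sphere_measure_le μ (T := (y + ·) ⁻¹' (S ∩ K))
    (measurable_const_add y (hS.inter hK)) fun x hx ↦ by simpa using hKD _ hx.2 y hy
  rw [measure_preimage_add] at hle
  refine ⟨η, hη, hle.trans (mul_le_mul_right (measure_mono ?_) _)⟩
  rintro t ⟨ht, htS, htK⟩
  exact ⟨⟨ht.le, le_rayLength hKD hy (mem_sphere_zero_iff_norm.1 hη) ⟨ht.le, htK⟩⟩, htS⟩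

end PolarCoordinates

namespace InnerProductSpace

open Real

variable {E : Type*} [NormedAddCommGroup E] [InnerProductSpace ℝ E] [FiniteDimensional ℝ E]
  [Nontrivial E] [MeasurableSpace E] [BorelSpace E]

theorem volume_toSphere_real_univ :
    (volume : Measure E).toSphere.real univ =
      2 * π ^ ((Module.finrank ℝ E : ℝ) / 2) / Gamma ((Module.finrank ℝ E : ℝ) / 2) := by
  have hn : (0 : ℝ) < Module.finrank ℝ E := by exact_mod_cast Module.finrank_pos
  rw [toSphere_real_apply_univ, measureReal_def, volume_ball, ENNReal.ofReal_one, one_pow, one_mul,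
    ENNReal.toReal_ofReal (by positivity), Gamma_add_one (by positivity), sqrt_eq_rpow,
    ← rpow_natCast, ← rpow_mul pi_nonneg]
  field_simp

theorem exists_norm_eq_one_measureReal_inter_le {K S : Set E} (hK : MeasurableSet K)
    (hS : MeasurableSet S) {D : ℝ} (hKD : ∀ a ∈ K, ∀ b ∈ K, dist a b ≤ D) {y : E} (hy : y ∈ K) :
    ∃ η : E, ‖η‖ = 1 ∧ volume.real (S ∩ K) ≤
      2 * π ^ ((Module.finrank ℝ E : ℝ) / 2) / Gamma ((Module.finrank ℝ E : ℝ) / 2) *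
        D ^ (Module.finrank ℝ E - 1) *
          volume.real {t | t ∈ Icc 0 (rayLength K y η) ∧ y + t • η ∈ S} := by
  obtain ⟨η, hη, hle⟩ := exists_mem_sphere_measure_inter_le volume hK hS hKD hy
  have hη1 : ‖η‖ = 1 := mem_sphere_zero_iff_norm.1 hη
  have hsegment : volume {t | t ∈ Icc 0 (rayLength K y η) ∧ y + t • η ∈ S} ≠ ∞ :=
    ((measure_mono fun _ ht ↦ ht.1).trans_lt measure_Icc_lt_top).ne
  refine ⟨η, hη1, ?_⟩
  have hD : 0 ≤ D := dist_self y ▸ hKD y hy y hy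
  have := ENNReal.toReal_mono (by finiteness) hle
  rwa [ENNReal.toReal_mul, ENNReal.toReal_mul, ← measureReal_def (s := univ),
    volume_toSphere_real_univ, ENNReal.toReal_ofReal (by positivity)] at this

end InnerProductSpace

theorem EuclideanSpace.dist_le_sqrt_card {ι : Type*} [Fintype ι] {c : ι → ℝ}
    {a b : EuclideanSpace ℝ ι} (ha : ∀ j, a j ∈ Icc (c j) (c j + 1))
    (hb : ∀ j, b j ∈ Icc (c j) (c j + 1)) : dist a b ≤ √(Fintype.card ι) := by
  rw [EuclideanSpace.dist_eq]
  gcongr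
  calc ∑ j, dist (a j) (b j) ^ 2 ≤ ∑ _j : ι, (1 : ℝ) := by
        gcongr with j
        rw [Real.dist_eq, sq_le_one_iff_abs_le_one, abs_abs, abs_sub_le_iff]
        constructor <;> linarith [(ha j).1, (ha j).2, (hb j).1, (hb j).2]
    _ = Fintype.card ι := by simp

theorem EuclideanSpace.measurableSet_setOf_forall_mem_Icc {ι : Type*} [Fintype ι]
    (l u : ι → ℝ) : MeasurableSet {x : EuclideanSpace ℝ ι | ∀ j, x j ∈ Icc (l j) (u j)} := by
  rw [ofPred_forall]
  exact MeasurableSet.iInter fun j ↦ measurableSet_Icc.preimage (by fun_prop)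

theorem Real.sqrt_pow_eq_rpow {x : ℝ} (hx : 0 ≤ x) (n : ℕ) : √x ^ n = x ^ ((n : ℝ) / 2) := by
  rw [sqrt_eq_rpow, ← rpow_natCast, ← rpow_mul hx]
  ring_nf

theorem div_le_and_div_mul_le_div_of_le_mul {V A m r D : ℝ} (hA : 0 < A) (hV : 0 < V)
    (h : V ≤ A * m) (hmr : m ≤ r) (hrD : r ≤ D) : V / A ≤ m ∧ V / (A * D) ≤ m / r := by
  have hVA : V / A ≤ m := (div_le_iff₀ hA).2 (by linarith [mul_comm A m])
  have hm : 0 < m := (div_pos hV hA).trans_le hVA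
  refine ⟨hVA, ?_⟩
  calc V / (A * D) = V / A / D := (div_div _ _ _).symm
    _ ≤ m / D := by gcongr; linarith
    _ ≤ m / r := by gcongr; linarith

/-- for a closed unit cube `Λ ⊆ ℝ^d`, a measurable `S` with `|S ∩ Λ| > 0`
and `y ∈ Λ`, there is a direction `η` of unit (Euclidean) norm such that the longest line
segment `I ⊆ Λ` starting at `y` in direction `η` meets `S` in a set of one-dimensional
measure at least `|S ∩ Λ|/(σ_{d-1} d^{(d-1)/2})`; in particular (since `|I| ≤ √d`), the
density of `S` on `I` is at least `|S ∩ Λ|/(σ_{d-1} d^{d/2})`. Here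
`σ_{d-1} = 2π^{d/2}/Γ(d/2)` is the surface measure of the unit sphere `𝕊^{d-1} ⊆ ℝ^d`. -/
theorem stmt_9 (d : ℕ) (hd : 1 ≤ d) (c : Fin d → ℝ)
    (Λ : Set (EuclideanSpace ℝ (Fin d)))
    (hΛ : Λ = {x : EuclideanSpace ℝ (Fin d) | ∀ j, x j ∈ Set.Icc (c j) (c j + 1)})
    (S : Set (EuclideanSpace ℝ (Fin d))) (hSm : MeasurableSet S)
    (hS0 : 0 < volume (S ∩ Λ)) (y : EuclideanSpace ℝ (Fin d)) (hy : y ∈ Λ) :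
    ∃ η : EuclideanSpace ℝ (Fin d), ‖η‖ = 1 ∧
      ∀ r₀ : ℝ, r₀ = sSup {r : ℝ | 0 ≤ r ∧ y + r • η ∈ Λ} →
        (volume (S ∩ Λ)).toReal /
            (2 * Real.pi ^ ((d : ℝ) / 2) / Real.Gamma ((d : ℝ) / 2) *
              (d : ℝ) ^ (((d : ℝ) - 1) / 2)) ≤
          (volume {t : ℝ | t ∈ Set.Icc 0 r₀ ∧ y + t • η ∈ S}).toReal ∧
        (volume (S ∩ Λ)).toReal /
            (2 * Real.pi ^ ((d : ℝ) / 2) / Real.Gamma ((d : ℝ) / 2) *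
              (d : ℝ) ^ ((d : ℝ) / 2)) ≤
          (volume {t : ℝ | t ∈ Set.Icc 0 r₀ ∧ y + t • η ∈ S}).toReal / r₀ := by
  have : Nonempty (Fin d) := ⟨⟨0, hd⟩⟩
  have hΛD : ∀ a ∈ Λ, ∀ b ∈ Λ, dist a b ≤ √d := by
    subst hΛ
    simpa using fun a ha b hb ↦ EuclideanSpace.dist_le_sqrt_card (c := c) (a := a) (b := b) ha hb
  have hΛm : MeasurableSet Λ := hΛ ▸ EuclideanSpace.measurableSet_setOf_forall_mem_Icc _ _
  have hV : 0 < volume.real (S ∩ Λ) := ENNReal.toReal_pos hS0.ne'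
    ((measure_mono inter_subset_right).trans_lt (isBounded_iff.2 ⟨√d, hΛD⟩).measure_lt_top).ne
  obtain ⟨η, hη, hle⟩ :=
    InnerProductSpace.exists_norm_eq_one_measureReal_inter_le hΛm hSm hΛD hy
  rw [finrank_euclideanSpace_fin, Real.sqrt_pow_eq_rpow d.cast_nonneg, Nat.cast_pred hd] at hle
  refine ⟨η, hη, fun r₀ hr₀ ↦ ?_⟩
  change r₀ = rayLength Λ y η at hr₀
  have hr₀0 : 0 ≤ r₀ := hr₀ ▸ rayLength_nonneg hΛD hy hη
  have hsegment : volume.real {t | t ∈ Icc 0 r₀ ∧ y + t • η ∈ S} ≤ r₀ :=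
    (measureReal_mono (fun _ ht ↦ ht.1) measure_Icc_lt_top.ne).trans_eq
      (by rw [Real.volume_real_Icc_of_le hr₀0, sub_zero])
  have hsplit : (d : ℝ) ^ ((d : ℝ) / 2) = (d : ℝ) ^ (((d : ℝ) - 1) / 2) * √d := by
    rw [Real.sqrt_eq_rpow, ← Real.rpow_add (by positivity)]
    ring_nf
  rw [hsplit, ← mul_assoc]
  exact div_le_and_div_mul_le_div_of_le_mul (by positivity) hV (hr₀ ▸ hle) hsegment
    (hr₀ ▸ rayLength_le hΛD hy hη)
end

section
/- Let d ≥ 1, let Ω ⊆ ℝ^d be open, and let f be a smooth function on Ω such that f and all its partial derivatives belong to L²(Ω). Suppose there exist a constant C > 0 and b ∈ ℝ₊^d such that ‖∂^α f‖_{L²(Ω)} ≤ (∏_{j=1}^d (C b_j)^{α_j}) ‖f‖_{L²(Ω)} for all multi-indices α ∈ ℕ₀^d. Let (Λ_j)_{j∈J} be a countable family of measurable subsets of Ω with Ω = ∪_{j∈J} Λ_j and such that every point of Ω lies in at most 2^{d−1} of the sets Λ_j. Call an index j ∈ J bad if there exists a multi-index α ∈ ℕ₀^d with α ≠ 0 such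 that ‖∂^α f‖_{L²(Λ_j)} ≥ 2^{(2d−1)/2} (∏_{j'=1}^d (3 C b_{j'})^{α_{j'}}) ‖f‖_{L²(Λ_j)}. Then ‖f‖²_{L²(∪_{j bad} Λ_j)} ≤ (1/2) ‖f‖²_{L²(Ω)}. -/
/-!
On a bad cube `Λ n` with offending multi-index `α ≠ 0` and constant
`K α = 2^((2d-1)/2) ∏ (3 C b j)^(α j)`, we have
`‖f‖²_{Λ n} ≤ K α⁻² ‖∂^α f‖²_{Λ n} ≤ ∑_{β ≠ 0} K β⁻² ‖∂^β f‖²_{Λ n}`.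
Summing over the bad cubes, the overlap bound gives `∑ n, ‖∂^β f‖²_{Λ n} ≤ 2^(d-1) ‖∂^β f‖²_Ω`,
and the Bernstein inequality bounds this by `2^(d-1) (∏ (C b j)^(β j))² ‖f‖²_Ω`.
The resulting weights sum to `2^(-d) ((9/8)^d - 1) ≤ 1/2`.
-/

open MeasureTheory

/-- Partial derivative in the `j`-th coordinate direction. -/
noncomputable def partialD {d : ℕ} (j : Fin d) (g : (Fin d → ℝ) → ℂ) : (Fin d → ℝ) → ℂ :=
  fun x => fderiv ℝ g x (Pi.single j 1)

/-- `n`-fold partial derivative in the `j`-th coordinate direction. -/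
noncomputable def partialDIter {d : ℕ} (j : Fin d) :
    ℕ → ((Fin d → ℝ) → ℂ) → (Fin d → ℝ) → ℂ
  | 0, g => g
  | n + 1, g => partialD j (partialDIter j n g)

/-- The partial derivative `∂^α` with multi-index `α ∈ ℕ₀^d`. -/
noncomputable def multiD {d : ℕ} (α : Fin d → ℕ) (g : (Fin d → ℝ) → ℂ) : (Fin d → ℝ) → ℂ :=
  (List.ofFn fun j : Fin d => partialDIter j (α j)).foldr (fun F h => F h) g

open scoped ENNReal

theorem eLpNorm_two_sq {X E : Type*} [MeasurableSpace X] [NormedAddCommGroup E]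
    (μ : Measure X) (g : X → E) :
    eLpNorm g 2 μ ^ 2 = ∫⁻ x, ‖g x‖ₑ ^ 2 ∂μ := by
  simpa using eLpNorm_nnreal_pow_eq_lintegral (f := g) (μ := μ) (p := 2) two_ne_zero

theorem ENNReal.sq_le_inv_sq_mul_sq_of_mul_le {K a b : ℝ≥0∞} (hK0 : K ≠ 0) (hK : K ≠ ⊤)
    (h : K * a ≤ b) : a ^ 2 ≤ K⁻¹ ^ 2 * b ^ 2 := by
  rw [← mul_pow]
  gcongr
  rwa [← ENNReal.div_eq_inv_mul, ENNReal.le_div_iff_mul_le (.inl hK0) (.inl hK), mul_comm]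

theorem tsum_indicator_le_encard_mul {X ι : Type*} {s : ι → Set X} {N : ℕ}
    (hN : ∀ x, {i | x ∈ s i}.encard ≤ N) (g : X → ℝ≥0∞) (x : X) :
    ∑' i, (s i).indicator g x ≤ N * (⋃ i, s i).indicator g x := by
  by_cases hx : x ∈ ⋃ i, s i
  · rw [Set.indicator_of_mem hx]
    calc ∑' i, (s i).indicator g x = ∑' i, {i | x ∈ s i}.indicator (fun _ => g x) i := rfl
      _ = {i | x ∈ s i}.encard * g x := by rw [← tsum_subtype, ENNReal.tsum_set_const]
      _ ≤ N * g x := by gcongr; exact_mod_cast hN x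
  · rw [Set.indicator_of_notMem hx, mul_zero, nonpos_iff_eq_zero, ENNReal.tsum_eq_zero]
    exact fun i => Set.indicator_of_notMem (fun hi => hx (Set.mem_iUnion_of_mem i hi)) g

section Overlap

variable {X ι : Type*} [MeasurableSpace X] {μ : Measure X} [Countable ι]

theorem tsum_lintegral_le_lintegral_tsum (f : ι → X → ℝ≥0∞) :
    ∑' i, ∫⁻ x, f i x ∂μ ≤ ∫⁻ x, ∑' i, f i x ∂μ := by
  choose g hg_meas hg_le hg_eq using fun i => exists_measurable_le_lintegral_eq μ (f i)
  calc ∑' i, ∫⁻ x, f i x ∂μ = ∫⁻ x, ∑' i, g i x ∂μ := by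
        simp only [hg_eq, lintegral_tsum fun i => (hg_meas i).aemeasurable]
    _ ≤ ∫⁻ x, ∑' i, f i x ∂μ := lintegral_mono fun x => ENNReal.tsum_le_tsum fun i => hg_le i x

variable {s : ι → Set X} (hs : ∀ i, MeasurableSet (s i)) {N : ℕ}
  (hN : ∀ x, {i | x ∈ s i}.encard ≤ N)
include hs hN

theorem tsum_setLIntegral_le_mul_of_encard_le (g : X → ℝ≥0∞) :
    ∑' i, ∫⁻ x in s i, g x ∂μ ≤ N * ∫⁻ x in ⋃ i, s i, g x ∂μ := by
  simp only [← lintegral_indicator (hs _), ← lintegral_indicator (MeasurableSet.iUnion hs)]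
  calc ∑' i, ∫⁻ x, (s i).indicator g x ∂μ ≤ ∫⁻ x, ∑' i, (s i).indicator g x ∂μ :=
        tsum_lintegral_le_lintegral_tsum _
    _ ≤ ∫⁻ x, N * (⋃ i, s i).indicator g x ∂μ :=
        lintegral_mono (tsum_indicator_le_encard_mul hN g)
    _ = N * ∫⁻ x, (⋃ i, s i).indicator g x ∂μ :=
        lintegral_const_mul' _ _ (ENNReal.natCast_ne_top N)

theorem tsum_eLpNorm_two_sq_le_mul_of_encard_le {E : Type*} [NormedAddCommGroup E] (g : X → E) :
    ∑' i, eLpNorm g 2 (μ.restrict (s i)) ^ 2 ≤ N * eLpNorm g 2 (μ.restrict (⋃ i, s i)) ^ 2 := by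
  simpa only [eLpNorm_two_sq] using tsum_setLIntegral_le_mul_of_encard_le hs hN fun x => ‖g x‖ₑ ^ 2

theorem eLpNorm_biUnion_sq_le {κ E F : Type*} [NormedAddCommGroup E] [NormedAddCommGroup F]
    (g : X → E) (D : κ → X → F) {M K : κ → ℝ≥0∞} (hK0 : ∀ k, K k ≠ 0) (hK : ∀ k, K k ≠ ⊤)
    (hD : ∀ k, eLpNorm (D k) 2 (μ.restrict (⋃ i, s i)) ≤
      M k * eLpNorm g 2 (μ.restrict (⋃ i, s i)))
    {B : Set ι} (hB : ∀ i ∈ B, ∃ k, K k * eLpNorm g 2 (μ.restrict (s i)) ≤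
      eLpNorm (D k) 2 (μ.restrict (s i))) :
    eLpNorm g 2 (μ.restrict (⋃ i ∈ B, s i)) ^ 2 ≤
      (N * ∑' k, (M k / K k) ^ 2) * eLpNorm g 2 (μ.restrict (⋃ i, s i)) ^ 2 := by
  set S := ⋃ i, s i
  have h_bad (i : B) : eLpNorm g 2 (μ.restrict (s i)) ^ 2 ≤
      ∑' k, (K k)⁻¹ ^ 2 * eLpNorm (D k) 2 (μ.restrict (s i)) ^ 2 := by
    obtain ⟨k, hk⟩ := hB i i.2
    exact (ENNReal.sq_le_inv_sq_mul_sq_of_mul_le (hK0 k) (hK k) hk).trans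
      (ENNReal.le_tsum (f := fun k => (K k)⁻¹ ^ 2 * eLpNorm (D k) 2 (μ.restrict (s i)) ^ 2) k)
  have h_overlap (k : κ) : ∑' i : B, eLpNorm (D k) 2 (μ.restrict (s i)) ^ 2 ≤
      N * (M k ^ 2 * eLpNorm g 2 (μ.restrict S) ^ 2) :=
    calc ∑' i : B, eLpNorm (D k) 2 (μ.restrict (s i)) ^ 2
        ≤ ∑' i, eLpNorm (D k) 2 (μ.restrict (s i)) ^ 2 :=
          ENNReal.tsum_comp_le_tsum_of_injective Subtype.val_injective _
      _ ≤ N * eLpNorm (D k) 2 (μ.restrict S) ^ 2 :=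
          tsum_eLpNorm_two_sq_le_mul_of_encard_le hs hN _
      _ ≤ N * (M k ^ 2 * eLpNorm g 2 (μ.restrict S) ^ 2) := by
          rw [← mul_pow]; gcongr; exact hD k
  calc eLpNorm g 2 (μ.restrict (⋃ i ∈ B, s i)) ^ 2
      ≤ ∑' i : B, eLpNorm g 2 (μ.restrict (s i)) ^ 2 := by
        simp only [eLpNorm_two_sq, Set.biUnion_eq_iUnion]
        exact lintegral_iUnion_le _ _
    _ ≤ ∑' i : B, ∑' k, (K k)⁻¹ ^ 2 * eLpNorm (D k) 2 (μ.restrict (s i)) ^ 2 :=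
        ENNReal.tsum_le_tsum h_bad
    _ = ∑' k, (K k)⁻¹ ^ 2 * ∑' i : B, eLpNorm (D k) 2 (μ.restrict (s i)) ^ 2 := by
        rw [ENNReal.tsum_comm]; simp only [ENNReal.tsum_mul_left]
    _ ≤ ∑' k, (K k)⁻¹ ^ 2 * (N * (M k ^ 2 * eLpNorm g 2 (μ.restrict S) ^ 2)) := by
        gcongr with k; exact h_overlap k
    _ = (N * ∑' k, (M k / K k) ^ 2) * eLpNorm g 2 (μ.restrict S) ^ 2 := by
        rw [← ENNReal.tsum_mul_left, ← ENNReal.tsum_mul_right]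
        congr 1 with k
        rw [ENNReal.div_eq_inv_mul]
        ring

end Overlap

theorem ENNReal.tsum_fin_pi_prod {β : Type*} (g : β → ℝ≥0∞) (d : ℕ) :
    ∑' α : Fin d → β, ∏ j, g (α j) = (∑' k, g k) ^ d := by
  induction d with
  | zero => simp
  | succ n ih =>
    rw [← (Fin.consEquiv fun _ => β).tsum_eq, ENNReal.tsum_prod', pow_succ', ← ih,
      ← ENNReal.tsum_mul_right]
    congr 1 with k
    rw [← ENNReal.tsum_mul_left]
    congr 1 with α
    simp [Fin.consEquiv, Fin.prod_univ_succ]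

theorem ENNReal.one_add_tsum_prod_pow_of_ne_zero (q : ℝ≥0∞) (d : ℕ) :
    1 + ∑' α : {α : Fin d → ℕ // α ≠ 0}, ∏ j, q ^ α.1 j = (1 - q)⁻¹ ^ d := by
  rw [← ENNReal.tsum_geometric, ← ENNReal.tsum_fin_pi_prod (q ^ ·),
    ENNReal.tsum_eq_add_tsum_ite (f := fun α : Fin d → ℕ => ∏ j, q ^ α j) 0]
  simp only [Pi.zero_apply, pow_zero, Finset.prod_const_one]
  congr 1
  refine (tsum_subtype {α : Fin d → ℕ | α ≠ 0} (fun α => ∏ j, q ^ α j)).trans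
    (tsum_congr fun α => ?_)
  by_cases hα : α = 0 <;> simp [hα]

theorem nine_div_eight_pow_succ_le (e : ℕ) : (9 / 8 : ℝ) ^ (e + 1) ≤ 1 + 2 ^ e := by
  induction e with
  | zero => norm_num
  | succ n ih =>
    have : (1 : ℝ) ≤ 2 ^ n := one_le_pow₀ (by norm_num)
    rw [pow_succ (9 / 8 : ℝ) (n + 1), pow_succ (2 : ℝ) n]
    nlinarith

theorem tsum_prod_ninth_pow_le {d : ℕ} (hd : 1 ≤ d) :
    ∑' α : {α : Fin d → ℕ // α ≠ 0}, ∏ j, ENNReal.ofReal (1 / 9) ^ α.1 j ≤ 2 ^ (d - 1) := by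
  obtain ⟨e, rfl⟩ := Nat.exists_eq_add_of_le' hd
  have h_sum := ENNReal.one_add_tsum_prod_pow_of_ne_zero (ENNReal.ofReal (1 / 9)) (e + 1)
  rw [← ENNReal.ofReal_one, ← ENNReal.ofReal_sub _ (by norm_num),
    ← ENNReal.ofReal_inv_of_pos (by norm_num), ← ENNReal.ofReal_pow (by norm_num),
    ENNReal.ofReal_one] at h_sum
  have h_rhs : (1 : ℝ≥0∞) + 2 ^ e = ENNReal.ofReal (1 + 2 ^ e) := by
    rw [ENNReal.ofReal_add zero_le_one (by positivity), ENNReal.ofReal_one,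
      ENNReal.ofReal_pow zero_le_two, ENNReal.ofReal_ofNat]
  rw [← ENNReal.add_le_add_iff_left ENNReal.one_ne_top, h_sum, Nat.add_sub_cancel, h_rhs]
  refine ENNReal.ofReal_le_ofReal ?_
  convert nine_div_eight_pow_succ_le e using 2
  norm_num

theorem two_rpow_sq_mul_two (d : ℕ) :
    ((2 : ℝ) ^ ((2 * (d : ℝ) - 1) / 2)) ^ 2 * 2 = (2 ^ d) ^ 2 := by
  rw [← Real.rpow_mul_natCast zero_le_two, ← Real.rpow_add_one two_ne_zero, ← pow_mul,
    ← Real.rpow_natCast]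
  congr 1
  push_cast
  ring

theorem prod_pow_div_prod_const_mul_pow {ι : Type*} [Fintype ι] {c : ℝ} (hc : 0 < c)
    {x : ι → ℝ} (hx : ∀ j, 0 < x j) (α : ι → ℕ) :
    (∏ j, x j ^ α j) / ∏ j, (c * x j) ^ α j = ∏ j, (1 / c) ^ α j := by
  rw [← Finset.prod_div_distrib]
  refine Finset.prod_congr rfl fun j _ => ?_
  have := (hx j).ne'
  rw [← div_pow]
  field_simp

theorem two_pow_mul_ratio_sq {d : ℕ} (hd : 1 ≤ d) {x : Fin d → ℝ} (hx : ∀ j, 0 < x j)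
    (α : Fin d → ℕ) :
    2 ^ (d - 1) * ((∏ j, x j ^ α j) /
      (2 ^ ((2 * (d : ℝ) - 1) / 2) * ∏ j, (3 * x j) ^ α j)) ^ 2 =
      (∏ j, (1 / 9 : ℝ) ^ α j) / 2 ^ d := by
  have h_two : (2 : ℝ) ^ (d - 1) * 2 = 2 ^ d := pow_sub_one_mul (by omega) 2
  have h_ninth : (∏ j, (1 / 3 : ℝ) ^ α j) ^ 2 = ∏ j, (1 / 9 : ℝ) ^ α j := by
    rw [← Finset.prod_pow]
    refine Finset.prod_congr rfl fun j _ => ?_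
    rw [← pow_mul, mul_comm, pow_mul]
    norm_num
  rw [mul_comm (2 ^ ((2 * (d : ℝ) - 1) / 2) : ℝ), ← div_div,
    prod_pow_div_prod_const_mul_pow three_pos hx, div_pow, h_ninth]
  have h_sq := two_rpow_sq_mul_two d
  field_simp
  linear_combination (2 ^ d / 2 : ℝ) * h_two - (1 / 2 : ℝ) * h_sq

theorem two_pow_mul_tsum_ratio_sq_le {d : ℕ} (hd : 1 ≤ d) {x : Fin d → ℝ} (hx : ∀ j, 0 < x j) :
    2 ^ (d - 1) * ∑' α : {α : Fin d → ℕ // α ≠ 0},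
      (ENNReal.ofReal (∏ j, x j ^ α.1 j) /
        ENNReal.ofReal (2 ^ ((2 * (d : ℝ) - 1) / 2) * ∏ j, (3 * x j) ^ α.1 j)) ^ 2 ≤ 1 / 2 := by
  have h_term (α : Fin d → ℕ) : 2 ^ (d - 1) * (ENNReal.ofReal (∏ j, x j ^ α j) /
      ENNReal.ofReal (2 ^ ((2 * (d : ℝ) - 1) / 2) * ∏ j, (3 * x j) ^ α j)) ^ 2 =
      (∏ j, ENNReal.ofReal (1 / 9) ^ α j) * (2 ^ d)⁻¹ := by
    have hK : 0 < 2 ^ ((2 * (d : ℝ) - 1) / 2) * ∏ j, (3 * x j) ^ α j :=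
      mul_pos (by positivity) (Finset.prod_pos fun j _ => pow_pos (by linarith [hx j]) _)
    have hP : 0 ≤ ∏ j, x j ^ α j := Finset.prod_nonneg fun j _ => pow_nonneg (hx j).le _
    have h_two : (2 : ℝ≥0∞) ^ (d - 1) = ENNReal.ofReal (2 ^ (d - 1)) := by
      rw [ENNReal.ofReal_pow zero_le_two, ENNReal.ofReal_ofNat]
    rw [← ENNReal.ofReal_div_of_pos hK, ← ENNReal.ofReal_pow (div_nonneg hP hK.le), h_two,
      ← ENNReal.ofReal_mul (by positivity), two_pow_mul_ratio_sq hd hx, div_eq_mul_inv,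
      ENNReal.ofReal_mul (Finset.prod_nonneg fun j _ => by positivity),
      ENNReal.ofReal_prod_of_nonneg (fun j _ => by positivity),
      ENNReal.ofReal_inv_of_pos (by positivity), ENNReal.ofReal_pow zero_le_two,
      ENNReal.ofReal_ofNat]
    simp only [ENNReal.ofReal_pow (by norm_num : (0 : ℝ) ≤ 1 / 9)]
  rw [← ENNReal.tsum_mul_left]
  simp only [h_term, ENNReal.tsum_mul_right]
  calc (∑' α : {α : Fin d → ℕ // α ≠ 0}, ∏ j, ENNReal.ofReal (1 / 9) ^ α.1 j) * (2 ^ d)⁻¹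
      ≤ 2 ^ (d - 1) * (2 ^ d)⁻¹ := by
        gcongr
        exact tsum_prod_ninth_pow_le hd
    _ = 1 / 2 := by
        rw [← pow_sub_one_mul (by omega : d ≠ 0) (2 : ℝ≥0∞), ENNReal.mul_inv (by simp) (by simp),
          ← mul_assoc, ENNReal.mul_inv_cancel (by simp) (by simp), one_mul, one_div]

theorem stmt_10_general (d : ℕ) (hd : 1 ≤ d) (Ω : Set (Fin d → ℝ))
    (f : (Fin d → ℝ) → ℂ)
    (C : ℝ) (hC : 0 < C) (b : Fin d → ℝ) (hb : ∀ j, 0 < b j)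
    (hBern : ∀ α : Fin d → ℕ,
      eLpNorm (multiD α f) 2 (volume.restrict Ω) ≤
        ENNReal.ofReal (∏ j, (C * b j) ^ (α j)) * eLpNorm f 2 (volume.restrict Ω))
    (Λ : ℕ → Set (Fin d → ℝ)) (hΛm : ∀ n, MeasurableSet (Λ n))
    (hcover : Ω = ⋃ n, Λ n)
    (hoverlap : ∀ x : Fin d → ℝ, Set.encard {n : ℕ | x ∈ Λ n} ≤ 2 ^ (d - 1)) :
    eLpNorm f 2 (volume.restrict
        (⋃ n ∈ {n : ℕ | ∃ α : Fin d → ℕ, α ≠ 0 ∧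
          ENNReal.ofReal (2 ^ ((2 * (d : ℝ) - 1) / 2) * ∏ j, (3 * C * b j) ^ (α j)) *
              eLpNorm f 2 (volume.restrict (Λ n)) ≤
            eLpNorm (multiD α f) 2 (volume.restrict (Λ n))}, Λ n)) ^ 2 ≤
      (1 / 2 : ENNReal) * eLpNorm f 2 (volume.restrict Ω) ^ 2 := by
  subst hcover
  have hCb (j : Fin d) : 0 < C * b j := mul_pos hC (hb j)
  have hK (α : Fin d → ℕ) : 0 < 2 ^ ((2 * (d : ℝ) - 1) / 2) * ∏ j, (3 * C * b j) ^ (α j) :=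
    mul_pos (by positivity) (Finset.prod_pos fun j _ => pow_pos (by nlinarith [hCb j]) _)
  refine (eLpNorm_biUnion_sq_le hΛm (N := 2 ^ (d - 1)) (fun x => by exact_mod_cast hoverlap x)
    f (fun α : {α : Fin d → ℕ // α ≠ 0} => multiD α.1 f)
    (fun α => (ENNReal.ofReal_pos.mpr (hK α.1)).ne') (fun _ => ENNReal.ofReal_ne_top)
    (fun α => hBern α.1) (by rintro n ⟨α, hα, h_bad⟩; exact ⟨⟨α, hα⟩, h_bad⟩)).trans ?_
  gcongr
  push_cast
  simpa only [← mul_assoc] using two_pow_mul_tsum_ratio_sq_le hd hCb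

/-- the bad cubes carry at most half of the `L²` mass. -/
theorem stmt_10 (d : ℕ) (hd : 1 ≤ d) (Ω : Set (Fin d → ℝ)) (hΩ : IsOpen Ω)
    (f : (Fin d → ℝ) → ℂ) (hf : ContDiffOn ℝ (⊤ : ℕ∞) f Ω)
    (hL2 : ∀ α : Fin d → ℕ, MemLp (multiD α f) 2 (volume.restrict Ω))
    (C : ℝ) (hC : 0 < C) (b : Fin d → ℝ) (hb : ∀ j, 0 < b j)
    (hBern : ∀ α : Fin d → ℕ,
      eLpNorm (multiD α f) 2 (volume.restrict Ω) ≤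
        ENNReal.ofReal (∏ j, (C * b j) ^ (α j)) * eLpNorm f 2 (volume.restrict Ω))
    (Λ : ℕ → Set (Fin d → ℝ)) (hΛm : ∀ n, MeasurableSet (Λ n))
    (hcover : Ω = ⋃ n, Λ n)
    (hoverlap : ∀ x : Fin d → ℝ, Set.encard {n : ℕ | x ∈ Λ n} ≤ 2 ^ (d - 1)) :
    eLpNorm f 2 (volume.restrict
        (⋃ n ∈ {n : ℕ | ∃ α : Fin d → ℕ, α ≠ 0 ∧
          ENNReal.ofReal (2 ^ ((2 * (d : ℝ) - 1) / 2) * ∏ j, (3 * C * b j) ^ (α j)) *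
              eLpNorm f 2 (volume.restrict (Λ n)) ≤
            eLpNorm (multiD α f) 2 (volume.restrict (Λ n))}, Λ n)) ^ 2 ≤
      (1 / 2 : ENNReal) * eLpNorm f 2 (volume.restrict Ω) ^ 2 :=
  stmt_10_general d hd Ω f C hC b hb hBern Λ hΛm hcover hoverlap
end
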